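/- arXiv:1006.1410 — 7 statements merged into one kernel-verified Lean document; each statement's English description precedes it below -/
import Mathlib

section
/- For every finite set V, every integer k ≥ 1, and every finite word w over V with |w| ≥ k^{|V|}, the word w contains an infix x that can be decomposed as x = x₁⋯x_k where every x_i is a non-empty word with occ(x_i) = occ(x). -/
/- Common definitions for finite-time Muller games, following
   McNaughton / Fearnley-Zimmermann. -/

universe u

variable {V : Type u}

/-- The occurrence set of a finite word: the set of letters occurring in it. -/
def occ (x : List V) : Set V := {v | v ∈ x}

/-- `score F w` is the maximal `k` such that some suffix of `w` decomposes as
`x₁ ⋯ x_k` with every `xᵢ` non-empty and `occ xᵢ = F` (with `max ∅ = 0`). -/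
noncomputable def score (F : Set V) (w : List V) : ℕ :=
  sSup {k | ∃ xs : List (List V), xs.length = k ∧
    (∀ x ∈ xs, x ≠ [] ∧ occ x = F) ∧ xs.flatten <:+ w}

/-- `maxscore 𝓕 w` is the maximum of `score F u` over `F ∈ 𝓕` and non-empty
prefixes `u` of `w`. -/
noncomputable def maxscore (𝓕 : Set (Set V)) (w : List V) : ℕ :=
  sSup {n | ∃ F ∈ 𝓕, ∃ u : List V, u ≠ [] ∧ u <+: w ∧ n = score F u}

/-- `AccGood F w x` : `x` is a suffix of `w` with `occ x ⊆ F` such that removing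
any suffix `y` of `x` from `w` does not change the score of `F`. -/
def AccGood (F : Set V) (w x : List V) : Prop :=
  x <:+ w ∧ occ x ⊆ F ∧
    ∀ y : List V, y <:+ x → score F (w.take (w.length - y.length)) = score F w

/-- The accumulator `acc F w` : the occurrence set of the longest suffix `x` of `w`
with `occ x ⊆ F` such that the score of `F` did not change during `x`. -/
noncomputable def acc (F : Set V) (w : List V) : Set V :=
  occ (w.drop (sInf {i | AccGood F w (w.drop i)}))

/-- A non-empty word `w` is an `𝓕`-burden if `maxscore 𝓕 w ≤ 2` and for every
`F ∈ 𝓕` either `score F w = 0`, or `score F w = 1` and `acc F w = ∅`. -/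
def Burden (𝓕 : Set (Set V)) (w : List V) : Prop :=
  w ≠ [] ∧ maxscore 𝓕 w ≤ 2 ∧
    ∀ F ∈ 𝓕, score F w = 0 ∨ (score F w = 1 ∧ acc F w = ∅)

/-- The maxscore of an infinite sequence: the supremum (in `ℕ∞`) of the scores of
sets `F ∈ 𝓕` over all non-empty finite prefixes. -/
noncomputable def maxscoreInf (𝓕 : Set (Set V)) (ρ : ℕ → V) : ℕ∞ :=
  ⨆ F ∈ 𝓕, ⨆ n : ℕ, (score F ((List.range (n + 1)).map ρ) : ℕ∞)

/-- The set of elements occurring infinitely often in the sequence `ρ`. -/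
def limitSet (ρ : ℕ → V) : Set V := {v | ∀ N : ℕ, ∃ n, N ≤ n ∧ ρ n = v}

/-- The indicator of a play: the union of all `F ∈ 𝓕` with positive score
together with all non-empty accumulators of members of `𝓕`. -/
noncomputable def ind (𝓕 : Set (Set V)) (w : List V) : Set V :=
  (⋃ F ∈ {F ∈ 𝓕 | 0 < score F w}, F) ∪ ⋃ F ∈ {F ∈ 𝓕 | acc F w ≠ ∅}, acc F w

/-- An arena: a finite directed graph together with the set `V0` of vertices of
Player 0 (Player 1 owns the complement), where every vertex has a successor. -/
structure Arena (V : Type u) where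
  V0 : Set V
  E : V → V → Prop
  exists_succ : ∀ v, ∃ u, E v u

/-- The positions of Player `i`. -/
def Arena.pos (G : Arena V) (i : Fin 2) : Set V :=
  if i = 0 then G.V0 else G.V0ᶜ

/-- A strategy maps a history (the play so far, excluding the current vertex)
and the current vertex to a successor vertex. -/
abbrev Strategy (V : Type u) := List V → V → V

/-- A strategy is legal if it always moves along edges. -/
def Arena.Legal (G : Arena V) (σ : Strategy V) : Prop :=
  ∀ w v, G.E v (σ w v)

/-- An infinite play in `G` starting in `v`. -/
def Arena.IsPlay (G : Arena V) (v : V) (ρ : ℕ → V) : Prop :=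
  ρ 0 = v ∧ ∀ n, G.E (ρ n) (ρ (n + 1))

/-- An infinite play is consistent with the strategy `σ` of Player `i`. -/
def Arena.ConsistentInf (G : Arena V) (i : Fin 2) (σ : Strategy V) (ρ : ℕ → V) : Prop :=
  ∀ n, ρ n ∈ G.pos i → ρ (n + 1) = σ ((List.range n).map ρ) (ρ n)

/-- Player `i` (with winning condition `𝓕i`) wins the Muller game from `v`. -/
def Arena.MullerWinFrom (G : Arena V) (i : Fin 2) (𝓕i : Set (Set V)) (v : V) : Prop :=
  ∃ σ : Strategy V, G.Legal σ ∧
    ∀ ρ : ℕ → V, G.IsPlay v ρ → G.ConsistentInf i σ ρ → limitSet ρ ∈ 𝓕i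

/-- The winning region of Player `i` in the Muller game. -/
def Arena.MullerWinRegion (G : Arena V) (i : Fin 2) (𝓕i : Set (Set V)) : Set V :=
  {v | G.MullerWinFrom i 𝓕i v}

/-- A finite play is consistent with the strategy `σ` of Player `i`. -/
def Arena.ConsistentFin (G : Arena V) (i : Fin 2) (σ : Strategy V) (w : List V) : Prop :=
  ∀ (u : List V) (v x : V), u ++ [v, x] <+: w → v ∈ G.pos i → x = σ u v

/-- A play of the finite-time Muller game with threshold `k`: a finite path
whose maxscore (over all subsets) is exactly `k`, while the maxscore of
its proper prefixes is `< k`. -/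
def FTPlay (G : Arena V) (k : ℕ) (w : List V) : Prop :=
  w.Chain' G.E ∧ maxscore (Set.univ : Set (Set V)) w = k ∧
    maxscore (Set.univ : Set (Set V)) w.dropLast < k

/-- Player `i` wins the finite-time Muller game with threshold `k` from `v`. -/
def FTWinFrom (G : Arena V) (i : Fin 2) (𝓕i : Set (Set V)) (k : ℕ) (v : V) : Prop :=
  ∃ σ : Strategy V, G.Legal σ ∧
    ∀ w : List V, FTPlay G k w → w.head? = some v → G.ConsistentFin i σ w →
      ∃ F ∈ 𝓕i, score F w = k

/-- The winning region of Player `i` in the finite-time Muller game. -/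
def FTWinRegion (G : Arena V) (i : Fin 2) (𝓕i : Set (Set V)) (k : ℕ) : Set V :=
  {v | FTWinFrom G i 𝓕i k v}

/-- A play of McNaughton's finite-time Muller game: a finite path such that some
set `F` reaches score `|F|! + 1`, while no set did so in a proper prefix. -/
def McNPlay (G : Arena V) (w : List V) : Prop :=
  w.Chain' G.E ∧ (∃ F : Set V, score F w = F.ncard.factorial + 1) ∧
    ∀ u : List V, u <+: w → u ≠ w →
      ∀ F : Set V, score F u ≠ F.ncard.factorial + 1

/-- Player `i` wins McNaughton's finite-time Muller game from `v`. -/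
def McNWinFrom (G : Arena V) (i : Fin 2) (𝓕i : Set (Set V)) (v : V) : Prop :=
  ∃ σ : Strategy V, G.Legal σ ∧
    ∀ w : List V, McNPlay G w → w.head? = some v → G.ConsistentFin i σ w →
      ∃ F ∈ 𝓕i, score F w = F.ncard.factorial + 1

/-- The winning region of Player `i` in McNaughton's finite-time Muller game. -/
def McNWinRegion (G : Arena V) (i : Fin 2) (𝓕i : Set (Set V)) : Set V :=
  {v | McNWinFrom G i 𝓕i v}

open Classical in
/-- The list `ρ₀ ⋯ ρₙ` of the first `n+1` vertices of the unique play that starts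
in `v` and is consistent with the strategy `σ` of Player `i` and the strategy `τ`
of the other player. -/
noncomputable def playList (G : Arena V) (i : Fin 2) (σ τ : Strategy V) (v : V) :
    ℕ → List V
  | 0 => [v]
  | n + 1 =>
      let w := playList G i σ τ v n
      let u := w.getLastD v
      w ++ [if u ∈ G.pos i then σ w.dropLast u else τ w.dropLast u]

/-- `playOf G i σ τ v` : the unique play starting in `v` that is consistent with
the strategy `σ` of Player `i` and the strategy `τ` of the other player. -/
noncomputable def playOf (G : Arena V) (i : Fin 2) (σ τ : Strategy V) (v : V)
    (n : ℕ) : V :=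
  (playList G i σ τ v n).getLastD v

/-- Split a list into `j` chunks of length `m` (the last ones possibly shorter). -/
def chunks (m : ℕ) : ℕ → List V → List (List V)
  | 0, _ => []
  | j + 1, u => u.take m :: chunks m j (u.drop m)

lemma chunks_length (m j : ℕ) (u : List V) : (chunks m j u).length = j := by
  induction j generalizing u with
  | zero => rfl
  | succ j ih => simp [chunks, ih]

lemma chunks_flatten (m j : ℕ) (u : List V) :
    (chunks m j u).flatten = u.take (m * j) := by
  induction j generalizing u with
  | zero => simp [chunks]
  | succ j ih =>
      simp only [chunks, List.flatten_cons, ih]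
      rw [show m * (j + 1) = m + m * j by ring, List.take_add]

lemma chunks_mem_infix (m j : ℕ) (u : List V) (c : List V)
    (hc : c ∈ chunks m j u) : c <:+: u := by
  induction j generalizing u with
  | zero => simp [chunks] at hc
  | succ j ih =>
      simp only [chunks, List.mem_cons] at hc
      rcases hc with rfl | hc
      · exact (List.take_prefix m u).isInfix
      · exact (ih _ hc).trans (List.drop_suffix m u).isInfix

lemma chunks_mem_length (m j : ℕ) (u : List V) (hu : m * j ≤ u.length)
    (c : List V) (hc : c ∈ chunks m j u) : c.length = m := by
  induction j generalizing u with
  | zero => simp [chunks] at hc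
  | succ j ih =>
      simp only [chunks, List.mem_cons] at hc
      have h1 : m ≤ u.length := le_trans (by nlinarith) hu
      rcases hc with rfl | hc
      · simp [h1]
      · exact ih (u.drop m) (by simp only [List.length_drop]; rw [Nat.mul_succ] at hu; omega) hc

lemma stmt_0_aux {V : Type u} (k : ℕ) (hk : 1 ≤ k) : ∀ (n : ℕ) (w : List V),
    (haveI := Classical.decEq V; w.toFinset.card) ≤ n → k ^ n ≤ w.length →
    ∃ x : List V, x <:+: w ∧ ∃ xs : List (List V),
      xs.length = k ∧ xs.flatten = x ∧ ∀ xi ∈ xs, xi ≠ [] ∧ occ xi = occ x := by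
  classical
  intro n
  induction n with
  | zero =>
      intro w hcard hlen
      simp only [Nat.le_zero, Finset.card_eq_zero, List.toFinset_eq_empty_iff] at hcard
      subst hcard
      exact absurd hlen (by simp)
  | succ n ih =>
      intro w hcard hlen
      set m := k ^ n with hm
      have hm1 : 1 ≤ m := Nat.one_le_pow _ _ hk
      have hmk : m * k ≤ w.length := by
        rw [hm, ← pow_succ]; exact hlen
      set u := w.take (m * k) with hu
      have hulen : u.length = m * k := by simp [hu, hmk]
      have huw : u <:+: w := (List.take_prefix _ w).isInfix
      by_cases hall : ∀ c ∈ chunks m k u, occ c = occ u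
      · refine ⟨u, huw, chunks m k u, chunks_length m k u, ?_, ?_⟩
        · rw [chunks_flatten]; simp [hulen]
        · intro c hc
          refine ⟨?_, hall c hc⟩
          have := chunks_mem_length m k u (by omega) c hc
          intro h; rw [h] at this; simp at this; omega
      · push_neg at hall
        obtain ⟨c, hc, hne⟩ := hall
        have hcu : c <:+: u := chunks_mem_infix m k u c hc
        have hsub : c.toFinset ⊆ u.toFinset := by
          intro a ha
          simp only [List.mem_toFinset] at ha ⊢
          exact hcu.subset ha
        have hnefin : c.toFinset ≠ u.toFinset := by
          intro h; apply hne
          have : (c.toFinset : Set V) = (u.toFinset : Set V) := by rw [h]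
          simpa [occ, List.coe_toFinset, Set.ext_iff] using this
        have hlt : c.toFinset.card < u.toFinset.card :=
          Finset.card_lt_card (lt_of_le_of_ne hsub hnefin)
        have hle : u.toFinset.card ≤ w.toFinset.card :=
          Finset.card_le_card (by
            intro a ha
            simp only [List.mem_toFinset] at ha ⊢
            exact huw.subset ha)
        have hclen : c.length = m := chunks_mem_length m k u (by omega) c hc
        obtain ⟨x, hx, xs, hxs⟩ := ih c (by omega) (by omega)
        exact ⟨x, hx.trans (hcu.trans huw), xs, hxs⟩

/-- For every finite set `V`, every `k ≥ 1`, and every finite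
word `w` over `V` with `|w| ≥ k^|V|`, the word `w` contains an infix `x` that
can be decomposed as `x = x₁ ⋯ x_k`, where every `xᵢ` is a non-empty word with
`occ xᵢ = occ x`. -/
theorem stmt_0 {V : Type u} [Fintype V] (k : ℕ) (hk : 1 ≤ k)
    (w : List V) (hw : k ^ Fintype.card V ≤ w.length) :
    ∃ x : List V, x <:+: w ∧ ∃ xs : List (List V),
      xs.length = k ∧ xs.flatten = x ∧ ∀ xi ∈ xs, xi ≠ [] ∧ occ xi = occ x := by
  classical
  exact stmt_0_aux k hk (Fintype.card V) w (Finset.card_le_univ _) hw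
end

section
/- Let G be an arena with vertex set V and let k ≥ 1. Every finite word w over V with |w| ≥ k^{|V|} satisfies maxscore_{2^V}(w) ≥ k. -/
/- Common definitions for finite-time Muller games, following
   McNaughton / Fearnley-Zimmermann. -/

universe u

variable {V : Type u}

/- Cut `w` into `k` consecutive blocks of length `k ^ n`. If every block contains all letters
of `w`, the blocks form `k` factors with the same occurrence set; otherwise some block uses
strictly fewer letters and is long enough for induction on the number of letters. A factor
`x₁ ⋯ x_k` of `w` then witnesses score `k` on the prefix of `w` that ends with it. -/

theorem List.length_le_length_flatten {α : Type*} {xs : List (List α)}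
    (h : ∀ x ∈ xs, x ≠ []) : xs.length ≤ xs.flatten.length := by
  rw [List.length_flatten, ← List.length_map (f := List.length)]
  refine List.length_le_sum_of_one_le _ fun n hn => ?_
  obtain ⟨x, hx, rfl⟩ := List.mem_map.mp hn
  exact List.length_pos_iff.mpr (h x hx)

theorem List.flatten_map_range_take_drop {α : Type*} (w : List α) (m : ℕ) :
    ∀ j, ((List.range j).map fun i => (w.drop (i * m)).take m).flatten = w.take (j * m)
  | 0 => by simp
  | j + 1 => by
    rw [List.range_succ, List.map_append, List.flatten_append,
      List.flatten_map_range_take_drop w m j]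
    simp [Nat.succ_mul, List.take_add]

section Score

variable {V : Type u}

theorem occ_subset_of_isInfix {u w : List V} (h : u <:+: w) : occ u ⊆ occ w :=
  fun _ hv => h.subset hv

theorem score_le_length (F : Set V) (u : List V) : score F u ≤ u.length := by
  refine csSup_le ⟨0, [], rfl, by simp, List.nil_suffix⟩ ?_
  rintro _ ⟨xs, rfl, hxs, hsuf⟩
  exact (List.length_le_length_flatten fun x hx => (hxs x hx).1).trans hsuf.length_le

theorem le_score {F : Set V} {u : List V} {xs : List (List V)}
    (hxs : ∀ x ∈ xs, x ≠ [] ∧ occ x = F) (hsuf : xs.flatten <:+ u) :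
    xs.length ≤ score F u :=
  le_csSup ⟨u.length, fun _ ⟨_, hys, hys', hysuf⟩ =>
    hys ▸ (List.length_le_length_flatten fun y hy => (hys' y hy).1).trans hysuf.length_le⟩
    ⟨xs, rfl, hxs, hsuf⟩

theorem score_le_maxscore {𝓕 : Set (Set V)} {F : Set V} (hF : F ∈ 𝓕) {u w : List V}
    (hu : u ≠ []) (huw : u <+: w) : score F u ≤ maxscore 𝓕 w :=
  le_csSup ⟨w.length, fun _ ⟨F', _, u', _, hu'w, hn⟩ =>
    hn ▸ (score_le_length F' u').trans hu'w.length_le⟩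
    ⟨F, hF, u, hu, huw, rfl⟩

theorem exists_uniform_factorization_isInfix (k : ℕ) :
    ∀ n (w : List V), (occ w).ncard ≤ n → k ^ n ≤ w.length →
      ∃ (F : Set V) (xs : List (List V)), xs.length = k ∧
        (∀ x ∈ xs, x ≠ [] ∧ occ x = F) ∧ xs.flatten <:+: w
  | 0, w, hcard, hlen => by
    obtain ⟨v, hv⟩ := List.exists_mem_of_length_pos (by rwa [pow_zero] at hlen)
    have : 0 < (occ w).ncard := (Set.ncard_pos w.finite_toSet).mpr ⟨v, hv⟩
    omega
  | n + 1, w, hcard, hlen => by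
    set m := k ^ n
    set block : ℕ → List V := fun i => (w.drop (i * m)).take m
    have block_isInfix (i : ℕ) : block i <:+: w :=
      (List.take_prefix m _).isInfix.trans (List.drop_suffix (i * m) w).isInfix
    have block_length {i : ℕ} (hi : i < k) : (block i).length = m := by
      have : i * m + m ≤ w.length := by
        rw [← Nat.succ_mul]
        exact (Nat.mul_le_mul_right m hi).trans (by rwa [pow_succ'] at hlen)
      simp only [block, List.length_take, List.length_drop]
      omega
    by_cases hall : ∀ i < k, occ (block i) = occ w
    · refine ⟨occ w, (List.range k).map block, by simp, ?_, ?_⟩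
      · simp only [List.mem_map, List.mem_range, forall_exists_index, and_imp]
        rintro _ i hi rfl
        refine ⟨fun hnil => ?_, hall i hi⟩
        have := block_length hi
        rw [hnil, List.length_nil] at this
        exact pow_ne_zero n (Nat.zero_lt_of_lt hi).ne' this.symm
      · rw [List.flatten_map_range_take_drop]
        exact (List.take_prefix _ w).isInfix
    · obtain ⟨i, hi, hne⟩ := not_forall₂.mp hall
      have hfewer : (occ (block i)).ncard < (occ w).ncard :=
        Set.ncard_lt_ncard ((occ_subset_of_isInfix (block_isInfix i)).ssubset_of_ne hne)
          w.finite_toSet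
      obtain ⟨F, xs, hxs⟩ := exists_uniform_factorization_isInfix k n (block i) (by omega)
        (block_length hi).ge
      exact ⟨F, xs, hxs.1, hxs.2.1, hxs.2.2.trans (block_isInfix i)⟩

end Score

theorem stmt_1_general {V : Type u} [Fintype V] (k : ℕ)
    (w : List V) (hw : k ^ Fintype.card V ≤ w.length) :
    k ≤ maxscore (Set.univ : Set (Set V)) w := by
  rcases k.eq_zero_or_pos with rfl | hk
  · exact Nat.zero_le _
  obtain ⟨F, xs, hlen, hxs, s, t, rfl⟩ :=
    exists_uniform_factorization_isInfix k _ w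
      ((Set.ncard_le_card _).trans_eq Nat.card_eq_fintype_card) hw
  have hflat : xs.flatten ≠ [] := fun h =>
    (List.length_le_length_flatten fun x hx => (hxs x hx).1).not_gt (by simp [h, hlen, hk])
  calc k = xs.length := hlen.symm
    _ ≤ score F (s ++ xs.flatten) := le_score hxs (List.suffix_append s _)
    _ ≤ maxscore Set.univ (s ++ xs.flatten ++ t) :=
      score_le_maxscore (Set.mem_univ F) (by simp [hflat]) (List.prefix_append _ t)

/-- Every finite word `w` over the vertex set `V` with
`|w| ≥ k^|V|` (for `k ≥ 1`) satisfies `maxscore_{2^V}(w) ≥ k`. -/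
theorem stmt_1 {V : Type u} [Fintype V] (k : ℕ) (hk : 1 ≤ k)
    (w : List V) (hw : k ^ Fintype.card V ≤ w.length) :
    k ≤ maxscore (Set.univ : Set (Set V)) w :=
  stmt_1_general k w hw
end

section
/- For every k ≥ 2 and n ≥ 1, the word w = w_{(k,n)} over the alphabet Σ_n = {1,…,n}, defined inductively by w_{(k,1)} = 1^{k−1} and w_{(k,n)} = (w_{(k,n−1)} n)^{k−1} w_{(k,n−1)}, satisfies maxscore_{2^{Σ_n}}(w) < k. -/
/- Common definitions for finite-time Muller games, following
   McNaughton / Fearnley-Zimmermann. -/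

universe u

variable {V : Type u}

/-- The word `w_{(k,n)}` over `Σ_n = {1, …, n}`, defined by
`w_{(k,1)} = 1^{k-1}` and `w_{(k,n)} = (w_{(k,n-1)} n)^{k-1} w_{(k,n-1)}`. -/
def wkn (k : ℕ) : ℕ → List ℕ
  | 0 => []
  | 1 => List.replicate (k - 1) 1
  | n + 2 => (List.replicate (k - 1) (wkn k (n + 1) ++ [n + 2])).flatten ++ wkn k (n + 1)

/-!
Every block of a score decomposition of a factor of `w_{(k,n)}` has the same letter set `F`.
If the largest letter `n` lies in `F`, each block contains an `n`, and `n` occurs only `k - 1`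
times in `w_{(k,n)}`. Otherwise the factor avoids `n`, so it lies inside one of the copies of
`w_{(k,n-1)}` separated by the letters `n`, and induction applies.
-/

namespace List

variable {α : Type*}

theorem eq_nil_of_prefix_cons_of_not_mem {l b : List α} {c : α} (h : l <+: c :: b)
    (hc : c ∉ l) : l = [] := by
  cases l with
  | nil => rfl
  | cons d l => exact absurd ((cons_prefix_cons.mp h).1 ▸ mem_cons_self) hc

theorem IsInfix.of_append_cons_of_not_mem {l a b : List α} {c : α} (h : l <:+: a ++ c :: b)
    (hc : c ∉ l) : l <:+: a ∨ l <:+: b := by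
  rcases infix_append_iff.mp h with h | h | ⟨l₁, l₂, rfl, h₁, h₂⟩
  · exact .inl h
  · rcases infix_cons_iff.mp h with h | h
    · exact .inl (eq_nil_of_prefix_cons_of_not_mem h hc ▸ nil_infix)
    · exact .inr h
  · obtain rfl := eq_nil_of_prefix_cons_of_not_mem h₂ fun h => hc (mem_append_right _ h)
    exact .inl (by simpa using h₁.isInfix)

theorem infix_of_infix_flatten_replicate_append {l w : List α} {c : α} (hc : c ∉ l) (j : ℕ)
    (h : l <:+: (replicate j (w ++ [c])).flatten ++ w) : l <:+: w := by
  induction j with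
  | zero => simpa using h
  | succ j ih =>
    rw [replicate_succ, flatten_cons, append_assoc, append_assoc, singleton_append] at h
    exact (h.of_append_cons_of_not_mem hc).elim id ih

variable [BEq α] [LawfulBEq α]

theorem count_flatten_replicate_append {w : List α} {c : α} (hc : c ∉ w) (j : ℕ) :
    ((replicate j (w ++ [c])).flatten ++ w).count c = j := by
  simp [count_flatten, count_eq_zero.mpr hc]

theorem length_le_count_flatten {c : α} {xs : List (List α)} (h : ∀ x ∈ xs, c ∈ x) :
    xs.length ≤ xs.flatten.count c := by
  rw [count_flatten]
  simpa using length_le_sum_of_one_le _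
    (forall_mem_map.mpr fun x hx => count_pos_iff.mpr (h x hx))

end List

theorem wkn_succ (k n : ℕ) :
    wkn k (n + 1) = (List.replicate (k - 1) (wkn k n ++ [n + 1])).flatten ++ wkn k n := by
  cases n <;> simp [wkn]

theorem le_of_mem_wkn {k n a : ℕ} (h : a ∈ wkn k n) : a ≤ n := by
  induction n with
  | zero => simp [wkn] at h
  | succ n ih =>
    obtain ⟨-, h | rfl⟩ | h : k - 1 ≠ 0 ∧ (a ∈ wkn k n ∨ a = n + 1) ∨ a ∈ wkn k n := by
      simpa [wkn_succ] using h
    · exact (ih h).trans n.le_succ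
    · rfl
    · exact (ih h).trans n.le_succ

theorem length_le_of_flatten_infix_wkn {k n : ℕ} {F : Set ℕ} (hF : F ⊆ Set.Icc 1 n)
    {xs : List (List ℕ)} (hxs : ∀ x ∈ xs, x ≠ [] ∧ occ x = F) (h : xs.flatten <:+: wkn k n) :
    xs.length ≤ k - 1 := by
  induction n with
  | zero =>
    have hnil : ∀ x ∈ xs, x = [] := List.flatten_eq_nil_iff.mp (List.eq_nil_of_infix_nil h)
    cases xs with
    | nil => exact Nat.zero_le _
    | cons x _ => exact absurd (hnil x List.mem_cons_self) (hxs x List.mem_cons_self).1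
  | succ n ih =>
    rw [wkn_succ] at h
    have hfresh : n + 1 ∉ wkn k n := fun hm => by have := le_of_mem_wkn hm; omega
    by_cases hn : n + 1 ∈ F
    · calc xs.length ≤ xs.flatten.count (n + 1) :=
            List.length_le_count_flatten fun x hx => show n + 1 ∈ occ x from (hxs x hx).2 ▸ hn
        _ ≤ _ := h.sublist.count_le _
        _ = k - 1 := List.count_flatten_replicate_append hfresh _
    · have hF' : F ⊆ Set.Icc 1 n := fun a ha =>
        ⟨(hF ha).1, Nat.le_of_lt_succ ((hF ha).2.lt_of_ne fun e => hn (e ▸ ha))⟩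
      have hav : n + 1 ∉ xs.flatten := fun hm => by
        obtain ⟨x, hx, hm⟩ := List.mem_flatten.mp hm
        exact hn ((hxs x hx).2 ▸ hm)
      exact ih hF' (List.infix_of_infix_flatten_replicate_append hav _ h)

theorem score_le_of_infix_wkn {k n : ℕ} {F : Set ℕ} (hF : F ⊆ Set.Icc 1 n) {u : List ℕ}
    (hu : u <:+: wkn k n) : score F u ≤ k - 1 :=
  csSup_le' <| by
    rintro _ ⟨xs, rfl, hxs, hsuf⟩
    exact length_le_of_flatten_infix_wkn hF hxs (hsuf.isInfix.trans hu)

theorem maxscore_wkn_le (k n : ℕ) : maxscore {F : Set ℕ | F ⊆ Set.Icc 1 n} (wkn k n) ≤ k - 1 :=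
  csSup_le' <| by
    rintro _ ⟨F, hF, u, -, hu, rfl⟩
    exact score_le_of_infix_wkn hF hu.isInfix

theorem stmt_3_general (k n : ℕ) (hk : 2 ≤ k) :
    maxscore {F : Set ℕ | F ⊆ Set.Icc 1 n} (wkn k n) < k :=
  (maxscore_wkn_le k n).trans_lt (by omega)

/-- For every `k ≥ 2` and `n ≥ 1`, the word `w = w_{(k,n)}`
over `Σ_n = {1, …, n}` satisfies `maxscore_{2^{Σ_n}}(w) < k`. -/
theorem stmt_3 (k n : ℕ) (hk : 2 ≤ k) (hn : 1 ≤ n) :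
    maxscore {F : Set ℕ | F ⊆ Set.Icc 1 n} (wkn k n) < k :=
  stmt_3_general k n hk
end

section
/- Let V be a finite set and let w be a non-empty finite word over V. The family consisting of all sets F ⊆ V with score_F(w) ≥ 1 together with all sets of the form acc_H(w) for some H ⊆ V forms a chain with respect to the subset relation, i.e., any two sets in this family are comparable by inclusion. -/
/- Common definitions for finite-time Muller games, following
   McNaughton / Fearnley-Zimmermann. -/

universe u

variable {V : Type u}

private lemma occ_subset_of_suffix {V : Type u} {x y : List V} (h : x <:+ y) :
    occ x ⊆ occ y := fun v hv => h.subset hv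

private lemma exists_suffix_occ {V : Type u} (w : List V) (A : Set V)
    (hA : 1 ≤ score A w ∨ ∃ H : Set V, A = acc H w) :
    ∃ x : List V, x <:+ w ∧ occ x = A := by
  rcases hA with hA | ⟨H, rfl⟩
  · set S := {k | ∃ xs : List (List V), xs.length = k ∧
      (∀ x ∈ xs, x ≠ [] ∧ occ x = A) ∧ xs.flatten <:+ w} with hS
    have hbdd : BddAbove S := by
      refine ⟨w.length, fun k hk => ?_⟩
      obtain ⟨xs, hlen, hxs, hsuf⟩ := hk
      have key : ∀ ys : List (List V), (∀ x ∈ ys, x ≠ [] ∧ occ x = A) →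
          ys.length ≤ ys.flatten.length := by
        intro ys hys
        induction ys with
        | nil => simp
        | cons a t ih =>
          simp only [List.flatten_cons, List.length_append, List.length_cons]
          have ha : a ≠ [] := (hys a (by simp)).1
          have h1 : 1 ≤ a.length := List.length_pos_iff.mpr ha
          have h2 := ih (fun x hx => hys x (by simp [hx]))
          omega
      have h1 := key xs hxs
      have h2 := hsuf.length_le
      omega
    have hne : S.Nonempty := ⟨0, [], by simp⟩
    have hmem : score A w ∈ S := Nat.sSup_mem hne hbdd
    obtain ⟨xs, hlen, hxs, hsuf⟩ := hmem
    have hxs0 : xs ≠ [] := by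
      intro h; rw [h] at hlen; simp at hlen; omega
    refine ⟨xs.flatten, hsuf, ?_⟩
    ext v
    simp only [occ, Set.mem_setOf_eq, List.mem_flatten]
    constructor
    · rintro ⟨x, hx, hvx⟩
      have := (hxs x hx).2
      rw [← this]; exact hvx
    · intro hv
      obtain ⟨x, hx⟩ := List.exists_mem_of_ne_nil xs hxs0
      refine ⟨x, hx, ?_⟩
      have := (hxs x hx).2
      rw [← this] at hv; exact hv
  · exact ⟨w.drop _, List.drop_suffix _ w, rfl⟩

/-- For a non-empty finite word `w` over a finite set `V`, the
family of all sets `F` with `score F w ≥ 1` together with all sets of the form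
`acc H w` forms a chain with respect to inclusion. -/
theorem stmt_4 {V : Type u} [Fintype V] (w : List V) (hw : w ≠ [])
    (A B : Set V)
    (hA : 1 ≤ score A w ∨ ∃ H : Set V, A = acc H w)
    (hB : 1 ≤ score B w ∨ ∃ H : Set V, B = acc H w) :
    A ⊆ B ∨ B ⊆ A := by
  obtain ⟨x, hx, rfl⟩ := exists_suffix_occ w A hA
  obtain ⟨y, hy, rfl⟩ := exists_suffix_occ w B hB
  rcases List.suffix_or_suffix_of_suffix hx hy with h | h
  · exact Or.inl (occ_subset_of_suffix h)
  · exact Or.inr (occ_subset_of_suffix h)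
end

section
/- Let V be a finite set, let k, l ≥ 2, let F, F' ⊆ V, let w be a finite word over V and v ∈ V such that score_F(w) < k and score_{F'}(w) < l. If score_F(wv) = k and score_{F'}(wv) = l, then F = F'. -/
/- Common definitions for finite-time Muller games, following
   McNaughton / Fearnley-Zimmermann. -/

universe u

variable {V : Type u}

/-
If the `F'`-score rises when `v` is appended, the last block `b` of an optimal
`F'`-decomposition of `wv` must need its last letter `v`: otherwise `b.dropLast` is an
`F'`-block and the score was already reached in `w`. Let `x₁ ⋯ x_k` (`k ≥ 2`) be
an `F`-decomposition ending at `v`. If `b` is a suffix of `x₁ ⋯ x_k` then `F' ⊆ F`;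
otherwise `b` contains all of `x₁ ⋯ x_k`, and `x₁` still covers `F` after `v` is dropped,
so `b` does not need `v`. By symmetry `F = F'`.
-/

def IsBlockSeq (F : Set V) (xs : List (List V)) : Prop :=
  ∀ x ∈ xs, x ≠ [] ∧ occ x = F

section Occ

lemma occ_append (x y : List V) : occ (x ++ y) = occ x ∪ occ y :=
  Set.ext fun _ => List.mem_append

lemma occ_subset_occ {x y : List V} (h : x ⊆ y) : occ x ⊆ occ y := h

lemma occ_dropLast_append {x : List V} (z : List V) (hx : x ≠ []) :
    occ (z ++ x).dropLast = occ z ∪ occ x.dropLast := by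
  rw [List.dropLast_append_of_ne_nil hx, occ_append]

end Occ

namespace IsBlockSeq

variable {F : Set V} {xs : List (List V)} {x : List V}

lemma append_singleton_iff : IsBlockSeq F (xs ++ [x]) ↔ IsBlockSeq F xs ∧ x ≠ [] ∧ occ x = F := by
  simp only [IsBlockSeq, List.mem_append, List.mem_singleton, or_imp, forall_and, forall_eq]
  tauto

lemma length_le_length_flatten (h : IsBlockSeq F xs) : xs.length ≤ xs.flatten.length := by
  induction xs with
  | nil => simp
  | cons x xs ih =>
    have hx : 0 < x.length := List.length_pos_iff.mpr (h x List.mem_cons_self).1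
    have := ih fun y hy => h y (List.mem_cons_of_mem x hy)
    simp only [List.flatten_cons, List.length_append, List.length_cons]
    omega

lemma occ_flatten (h : IsBlockSeq F xs) (hne : xs ≠ []) : occ xs.flatten = F := by
  refine Set.Subset.antisymm (fun u hu => ?_) fun u hu => ?_
  · obtain ⟨y, hy, huy⟩ := List.mem_flatten.mp hu
    exact (h y hy).2 ▸ huy
  · obtain ⟨y, hy⟩ := List.exists_mem_of_ne_nil xs hne
    exact List.mem_flatten.mpr ⟨y, hy, (Set.ext_iff.mp (h y hy).2 u).mpr hu⟩

lemma occ_flatten_dropLast (h : IsBlockSeq F xs) (hlen : 2 ≤ xs.length) :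
    occ xs.flatten.dropLast = F := by
  obtain ⟨x₁, x₂, ys, rfl⟩ : ∃ x₁ x₂ ys, xs = x₁ :: x₂ :: ys := by
    match xs, hlen with
    | x₁ :: x₂ :: ys, _ => exact ⟨x₁, x₂, ys, rfl⟩
  refine Set.Subset.antisymm ?_ ?_
  · exact h.occ_flatten (List.cons_ne_nil _ _) ▸ occ_subset_occ (List.dropLast_subset _)
  · have hrest : (x₂ :: ys).flatten ≠ [] := by
      simpa using fun hx₂ => absurd hx₂ (h x₂ (by simp)).1
    rw [List.flatten_cons, occ_dropLast_append _ hrest, (h x₁ List.mem_cons_self).2]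
    exact Set.subset_union_left

end IsBlockSeq

section Score

variable {F : Set V} {xs : List (List V)} {w : List V}

lemma bddAbove_score_set (F : Set V) (w : List V) :
    BddAbove {k | ∃ xs : List (List V), xs.length = k ∧ IsBlockSeq F xs ∧ xs.flatten <:+ w} := by
  refine ⟨w.length, ?_⟩
  rintro _ ⟨xs, rfl, hxs, hsuf⟩
  exact hxs.length_le_length_flatten.trans hsuf.length_le

lemma exists_isBlockSeq_length_eq_score (F : Set V) (w : List V) :
    ∃ xs : List (List V), xs.length = score F w ∧ IsBlockSeq F xs ∧ xs.flatten <:+ w := by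
  refine Nat.sSup_mem ?_ (bddAbove_score_set F w)
  exact ⟨0, [], rfl, by simp [IsBlockSeq], by simp⟩

lemma IsBlockSeq.length_le_score (h : IsBlockSeq F xs) (hsuf : xs.flatten <:+ w) :
    xs.length ≤ score F w :=
  le_csSup (bddAbove_score_set F w) ⟨xs, rfl, h, hsuf⟩

lemma length_le_score_of_occ_dropLast {ys : List (List V)} {b : List V} {v : V}
    (h : IsBlockSeq F (ys ++ [b])) (hsuf : (ys ++ [b]).flatten <:+ w ++ [v])
    (hb : occ b.dropLast = F) : ys.length + 1 ≤ score F w := by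
  obtain ⟨hys, hb_ne, hocc⟩ := IsBlockSeq.append_singleton_iff.mp h
  have hdrop_ne : b.dropLast ≠ [] := by
    rintro hnil
    obtain ⟨u, hu⟩ := List.exists_mem_of_ne_nil b hb_ne
    have : u ∈ occ b.dropLast := hb ▸ hocc ▸ hu
    simp [hnil, occ] at this
  have hblocks : IsBlockSeq F (ys ++ [b.dropLast]) :=
    IsBlockSeq.append_singleton_iff.mpr ⟨hys, hdrop_ne, hb⟩
  have hsuf' : (ys ++ [b.dropLast]).flatten <:+ w := by
    obtain ⟨r, hr⟩ := hsuf
    refine ⟨r, ?_⟩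
    have := congrArg List.dropLast hr
    simp only [List.flatten_append, List.flatten_singleton, List.dropLast_concat,
      ← List.append_assoc] at this ⊢
    rwa [List.dropLast_append_of_ne_nil hb_ne] at this
  simpa using hblocks.length_le_score hsuf'

lemma subset_of_two_le_score_of_score_lt {F F' : Set V} {v : V}
    (hF : 2 ≤ score F (w ++ [v])) (hF' : score F' w < score F' (w ++ [v])) : F' ⊆ F := by
  obtain ⟨xs, hxlen, hxs, hxsuf⟩ := exists_isBlockSeq_length_eq_score F (w ++ [v])
  obtain ⟨ys', hylen, hys', hysuf⟩ := exists_isBlockSeq_length_eq_score F' (w ++ [v])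
  obtain ⟨ys, b, rfl⟩ : ∃ ys b, ys' = ys ++ [b] := by
    rcases ys'.eq_nil_or_concat with rfl | ⟨ys, b, rfl⟩
    · rw [List.length_nil] at hylen; omega
    · exact ⟨ys, b, List.concat_eq_append⟩
  obtain ⟨-, hb_ne, hb⟩ := IsBlockSeq.append_singleton_iff.mp hys'
  have hbsuf : b <:+ w ++ [v] :=
    (List.suffix_append _ _).trans (by simpa using hysuf)
  have hxlen2 : 2 ≤ xs.length := hxlen ▸ hF
  have hocc_xs : occ xs.flatten = F := hxs.occ_flatten (List.ne_nil_of_length_pos (by omega))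
  rcases List.suffix_or_suffix_of_suffix hbsuf hxsuf with hb_xs | ⟨z, rfl⟩
  · rw [← hb, ← hocc_xs]
    exact occ_subset_occ hb_xs.subset
  · have hX : xs.flatten ≠ [] :=
      List.ne_nil_of_length_pos (by have := hxs.length_le_length_flatten; omega)
    have hdrop : occ (z ++ xs.flatten).dropLast = F' := by
      rw [occ_dropLast_append z hX, hxs.occ_flatten_dropLast hxlen2, ← hocc_xs, ← occ_append, hb]
    have := length_le_score_of_occ_dropLast hys' hysuf hdrop
    rw [List.length_append, List.length_singleton] at hylen
    omega

end Score

theorem stmt_6_general {V : Type u} (k l : ℕ) (hk : 2 ≤ k) (hl : 2 ≤ l)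
    (F F' : Set V) (w : List V) (v : V)
    (h1 : score F w < k) (h2 : score F' w < l)
    (h3 : score F (w ++ [v]) = k) (h4 : score F' (w ++ [v]) = l) :
    F = F' :=
  (subset_of_two_le_score_of_score_lt (h4 ▸ hl) (h3 ▸ h1)).antisymm
    (subset_of_two_le_score_of_score_lt (h3 ▸ hk) (h4 ▸ h2))

/-- If two sets `F` and `F'` reach scores `k ≥ 2` and `l ≥ 2`,
respectively, for the first time with the same letter `v`, then `F = F'`. -/
theorem stmt_6 {V : Type u} [Fintype V] (k l : ℕ) (hk : 2 ≤ k) (hl : 2 ≤ l)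
    (F F' : Set V) (w : List V) (v : V)
    (h1 : score F w < k) (h2 : score F' w < l)
    (h3 : score F (w ++ [v]) = k) (h4 : score F' (w ++ [v]) = l) :
    F = F' :=
  stmt_6_general k l hk hl F F' w v h1 h2 h3 h4
end

section
/- Every finite-time Muller game (G, 𝓕₀, 𝓕₁, k) with threshold k ≥ 2 is determined: the winning regions W₀' and W₁' of the two players form a partition of the vertex set V. -/
/- Common definitions for finite-time Muller games, following
   McNaughton / Fearnley-Zimmermann. -/

universe u

variable {V : Type u}

/-
A play ends as soon as some set reaches score `k`, and every word of length `k ^ |V|` has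
maxscore at least `k`; so the game has bounded length and backward induction (Zermelo) gives one
of the players a winning strategy from every vertex. Since `k ≥ 2`, at the end of a play only one
set has score `k`: otherwise one of the two would already have reached `k` before the last move.
Hence the play of two winning strategies cannot be won by both players.
-/
namespace FiniteTimeMuller

theorem occ_append (x y : List V) : occ (x ++ y) = occ x ∪ occ y := by
  ext v; simp [occ]

theorem occ_subset_of_isSuffix {x y : List V} (h : x <:+ y) : occ x ⊆ occ y :=
  fun _ hv => h.subset hv

theorem occ_subset_of_isInfix {x y : List V} (h : x <:+: y) : occ x ⊆ occ y :=
  fun _ hv => h.subset hv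

def IsBlocks (F : Set V) (xs : List (List V)) : Prop :=
  ∀ x ∈ xs, x ≠ [] ∧ occ x = F

theorem isBlocks_append {F : Set V} {xs ys : List (List V)} :
    IsBlocks F (xs ++ ys) ↔ IsBlocks F xs ∧ IsBlocks F ys :=
  List.forall_mem_append

theorem isBlocks_singleton {F : Set V} {x : List V} :
    IsBlocks F [x] ↔ x ≠ [] ∧ occ x = F :=
  List.forall_mem_singleton

theorem IsBlocks.length_le {F : Set V} {xs : List (List V)} (h : IsBlocks F xs) :
    xs.length ≤ xs.flatten.length := by
  induction xs with
  | nil => simp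
  | cons x xs ih =>
    have hx := List.length_pos_of_ne_nil (h x List.mem_cons_self).1
    have := ih fun y hy => h y (List.mem_cons_of_mem x hy)
    simp only [List.length_cons, List.flatten_cons, List.length_append]
    omega

theorem IsBlocks.occ_flatten {F : Set V} {xs : List (List V)} (h : IsBlocks F xs)
    (hne : xs ≠ []) : occ xs.flatten = F := by
  induction xs with
  | nil => contradiction
  | cons x xs ih =>
    rcases eq_or_ne xs [] with rfl | hxs
    · simpa using (h x List.mem_cons_self).2
    · rw [List.flatten_cons, occ_append, (h x List.mem_cons_self).2,
        ih (fun y hy => h y (List.mem_cons_of_mem x hy)) hxs, Set.union_self]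

theorem bddAbove_blockCounts (F : Set V) (w : List V) :
    BddAbove {k | ∃ xs : List (List V), xs.length = k ∧ IsBlocks F xs ∧ xs.flatten <:+ w} :=
  ⟨w.length, by rintro _ ⟨xs, rfl, hxs, hsuf⟩; exact hxs.length_le.trans hsuf.length_le⟩

theorem le_score {F : Set V} {w : List V} {xs : List (List V)} (hxs : IsBlocks F xs)
    (hsuf : xs.flatten <:+ w) : xs.length ≤ score F w :=
  le_csSup (bddAbove_blockCounts F w) ⟨xs, rfl, hxs, hsuf⟩

theorem exists_isBlocks_length_eq_score (F : Set V) (w : List V) :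
    ∃ xs : List (List V), xs.length = score F w ∧ IsBlocks F xs ∧ xs.flatten <:+ w :=
  Nat.sSup_mem
    (s := {k | ∃ xs : List (List V), xs.length = k ∧ IsBlocks F xs ∧ xs.flatten <:+ w})
    ⟨0, [], rfl, by simp [IsBlocks], List.nil_suffix⟩ (bddAbove_blockCounts F w)

theorem score_le_length (F : Set V) (w : List V) : score F w ≤ w.length := by
  obtain ⟨xs, hlen, hxs, hsuf⟩ := exists_isBlocks_length_eq_score F w
  exact hlen ▸ hxs.length_le.trans hsuf.length_le

theorem score_nil (F : Set V) : score F ([] : List V) = 0 :=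
  Nat.le_zero.mp (score_le_length F [])

theorem score_mono_of_isSuffix {F : Set V} {u w : List V} (h : u <:+ w) :
    score F u ≤ score F w := by
  obtain ⟨xs, hlen, hxs, hsuf⟩ := exists_isBlocks_length_eq_score F u
  exact hlen ▸ le_score hxs (hsuf.trans h)

theorem le_score_of_trim_last {F : Set V} {xs : List (List V)} {y t u : List V}
    (hxs : IsBlocks F xs) (hy : y ≠ []) (hyt : occ (y ++ t) = F) (ht : occ t ⊆ occ y)
    (hsuf : xs.flatten ++ y ++ t <:+ u ++ t) : xs.length + 1 ≤ score F u := by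
  have hocc : occ y = F := by rwa [occ_append, Set.union_eq_left.mpr ht] at hyt
  simpa using le_score (xs := xs ++ [y])
    (isBlocks_append.mpr ⟨hxs, isBlocks_singleton.mpr ⟨hy, hocc⟩⟩)
    (by simpa using List.suffix_append_self_iff.mp hsuf)

theorem score_append_singleton_le (F : Set V) (w : List V) (a : V) :
    score F (w ++ [a]) ≤ score F w + 1 := by
  obtain ⟨xs, hlen, hxs, hsuf⟩ := exists_isBlocks_length_eq_score F (w ++ [a])
  rw [← hlen]
  rcases xs.eq_nil_or_concat' with rfl | ⟨xs, z, rfl⟩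
  · simp
  rcases xs.eq_nil_or_concat' with rfl | ⟨ys, y, rfl⟩
  · simp
  obtain ⟨hys, hy, hz⟩ : IsBlocks F ys ∧ IsBlocks F [y] ∧ IsBlocks F [z] := by
    simpa only [isBlocks_append, and_assoc] using hxs
  obtain ⟨hyne, hyocc⟩ := isBlocks_singleton.mp hy
  obtain ⟨hzne, hzocc⟩ := isBlocks_singleton.mp hz
  obtain ⟨z, b, rfl⟩ := z.eq_nil_or_concat'.resolve_left hzne
  obtain ⟨p, hp⟩ := hsuf
  obtain rfl : b = a := by simpa using congrArg List.getLast? hp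
  have key := le_score_of_trim_last (y := y ++ z) (t := [b]) (u := w) hys (by simp [hyne])
    (by rw [List.append_assoc, occ_append, hyocc, hzocc, Set.union_self])
    (by rw [occ_append, hyocc, ← hzocc, occ_append]; exact fun _ hx => Or.inl (Or.inr hx))
    ⟨p, by simpa using hp⟩
  simpa using key

theorem bddAbove_prefixScores (𝓕 : Set (Set V)) (w : List V) :
    BddAbove {n | ∃ F ∈ 𝓕, ∃ u : List V, u ≠ [] ∧ u <+: w ∧ n = score F u} :=
  ⟨w.length, by rintro _ ⟨F, -, u, -, hu, rfl⟩; exact (score_le_length F u).trans hu.length_le⟩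

theorem le_maxscore {𝓕 : Set (Set V)} {F : Set V} {u w : List V} (hF : F ∈ 𝓕) (hu : u ≠ [])
    (huw : u <+: w) : score F u ≤ maxscore 𝓕 w :=
  le_csSup (bddAbove_prefixScores 𝓕 w) ⟨F, hF, u, hu, huw, rfl⟩

theorem score_le_maxscore {𝓕 : Set (Set V)} {F : Set V} (hF : F ∈ 𝓕) (w : List V) :
    score F w ≤ maxscore 𝓕 w := by
  rcases eq_or_ne w [] with rfl | hw
  · simp [score_nil]
  · exact le_maxscore hF hw List.prefix_rfl

theorem maxscore_le {𝓕 : Set (Set V)} {w : List V} {n : ℕ}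
    (h : ∀ F ∈ 𝓕, ∀ u : List V, u ≠ [] → u <+: w → score F u ≤ n) : maxscore 𝓕 w ≤ n :=
  csSup_le' <| by rintro _ ⟨F, hF, u, hu, huw, rfl⟩; exact h F hF u hu huw

theorem maxscore_le_length (𝓕 : Set (Set V)) (w : List V) : maxscore 𝓕 w ≤ w.length :=
  maxscore_le fun F _ u _ huw => (score_le_length F u).trans huw.length_le

theorem maxscore_mono_of_isPrefix {𝓕 : Set (Set V)} {u w : List V} (h : u <+: w) :
    maxscore 𝓕 u ≤ maxscore 𝓕 w :=
  maxscore_le fun _ hF _ hp hpu => le_maxscore hF hp (hpu.trans h)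

theorem maxscore_mono_of_isInfix {𝓕 : Set (Set V)} {u w : List V} (h : u <:+: w) :
    maxscore 𝓕 u ≤ maxscore 𝓕 w := by
  obtain ⟨s, t, rfl⟩ := h
  refine maxscore_le fun F hF p hp hpu => ?_
  obtain ⟨q, rfl⟩ := hpu
  calc score F p ≤ score F (s ++ p) := score_mono_of_isSuffix (List.suffix_append s p)
    _ ≤ maxscore 𝓕 (s ++ (p ++ q) ++ t) :=
      le_maxscore hF (by simp [hp]) ⟨q ++ t, by simp⟩

theorem maxscore_append_singleton_le (𝓕 : Set (Set V)) (w : List V) (a : V) :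
    maxscore 𝓕 (w ++ [a]) ≤ maxscore 𝓕 w + 1 := by
  refine maxscore_le fun F hF u hu huw => ?_
  rcases List.prefix_concat_iff.mp huw with rfl | huw
  · exact (score_append_singleton_le F w a).trans (by simpa using score_le_maxscore hF w)
  · exact (le_maxscore hF hu huw).trans (Nat.le_succ _)

theorem isPrefix_dropLast_of_ne {u w : List V} (h : u <+: w) (hne : u ≠ w) :
    u <+: w.dropLast := by
  have hlt : u.length < w.length := lt_of_le_of_ne h.length_le (hne ∘ h.eq_of_length)
  rw [List.dropLast_eq_take]
  exact List.prefix_take_iff.mpr ⟨h, by omega⟩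

theorem exists_score_eq_of_ftPlay {G : Arena V} {k : ℕ} {w : List V} (hk : 0 < k)
    (hw : FTPlay G k w) : ∃ F : Set V, score F w = k := by
  obtain ⟨-, hmax, hdrop⟩ := hw
  have hne : w ≠ [] := by
    rintro rfl
    have := maxscore_le_length Set.univ ([] : List V)
    simp only [List.length_nil] at this
    omega
  obtain ⟨F, -, u, hu, huw, hFu⟩ : maxscore Set.univ w ∈
      {n | ∃ F ∈ (Set.univ : Set (Set V)), ∃ u : List V, u ≠ [] ∧ u <+: w ∧ n = score F u} :=
    Nat.sSup_mem ⟨_, ∅, Set.mem_univ ∅, w, hne, List.prefix_rfl, rfl⟩ (bddAbove_prefixScores _ w)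
  refine ⟨F, ?_⟩
  by_cases huw' : u = w
  · rw [← huw', ← hFu, hmax]
  · have := le_maxscore (Set.mem_univ F) hu (isPrefix_dropLast_of_ne huw huw')
    omega

theorem eq_of_isBlocks_of_length_le {k : ℕ} (hk : 2 ≤ k) {w : List V}
    (hdrop : maxscore Set.univ w.dropLast < k) {F F' : Set V} {xs ys : List (List V)}
    (hxs : IsBlocks F xs) (hxl : xs.length = k) (hxw : xs.flatten <:+ w)
    (hys : IsBlocks F' ys) (hyl : ys.length = k) (hyw : ys.flatten <:+ w)
    (hle : xs.flatten.length ≤ ys.flatten.length) : F = F' := by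
  have hxne : xs ≠ [] := by rintro rfl; simp only [List.length_nil] at hxl; omega
  have hyne : ys ≠ [] := by rintro rfl; simp only [List.length_nil] at hyl; omega
  have hFF' : F ⊆ F' := by
    rw [← hxs.occ_flatten hxne, ← hys.occ_flatten hyne]
    exact occ_subset_of_isSuffix (List.suffix_of_suffix_length_le hxw hyw hle)
  obtain ⟨ys, y, rfl⟩ := ys.eq_nil_or_concat'.resolve_left hyne
  rw [isBlocks_append, isBlocks_singleton] at hys
  obtain ⟨hys, -, hyocc⟩ := hys
  have hyw' : y <:+ w := (List.suffix_append _ _).trans (by simpa using hyw)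
  rcases le_total y.length xs.flatten.length with hyx | hxy
  · refine hFF'.antisymm ?_
    rw [← hyocc, ← hxs.occ_flatten hxne]
    exact occ_subset_of_isSuffix (List.suffix_of_suffix_length_le hyw' hxw hyx)
  -- Otherwise the last `F'`-block `y` contains all `F`-blocks; cutting off the last of them
  -- leaves `k` blocks for `F'` in a proper prefix of `w`.
  exfalso
  obtain ⟨p, rfl⟩ := List.suffix_of_suffix_length_le hxw hyw' hxy
  obtain ⟨xs, x, rfl⟩ := xs.eq_nil_or_concat'.resolve_left hxne
  rw [isBlocks_append, isBlocks_singleton] at hxs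
  obtain ⟨hxs, hxne', hxocc⟩ := hxs
  have hxs' : xs ≠ [] := by
    rintro rfl
    simp only [List.nil_append, List.length_singleton] at hxl
    omega
  obtain ⟨u, rfl⟩ : x <:+ w := (List.suffix_append _ _).trans (by simpa using hxw)
  have hk' : k ≤ score F' u := by
    have := le_score_of_trim_last (y := p ++ xs.flatten) (t := x) (u := u) hys
      (List.append_ne_nil_of_right_ne_nil p (List.ne_nil_of_length_pos
        (hxs.length_le.trans_lt' (List.length_pos_of_ne_nil hxs'))))
      (by simpa using hyocc)
      (by rw [hxocc, occ_append, hxs.occ_flatten hxs']; exact Set.subset_union_right)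
      (by simpa using hyw)
    simpa [← hyl] using this
  have hu : u ≠ [] := by rintro rfl; rw [score_nil] at hk'; omega
  have := le_maxscore (Set.mem_univ F') hu
    (isPrefix_dropLast_of_ne (List.prefix_append u x) (by simpa using hxne'))
  omega

theorem eq_of_score_eq {k : ℕ} (hk : 2 ≤ k) {w : List V}
    (hdrop : maxscore Set.univ w.dropLast < k) {F F' : Set V} (hF : score F w = k)
    (hF' : score F' w = k) : F = F' := by
  obtain ⟨xs, hxl, hxs, hxw⟩ := exists_isBlocks_length_eq_score F w
  obtain ⟨ys, hyl, hys, hyw⟩ := exists_isBlocks_length_eq_score F' w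
  rcases le_total xs.flatten.length ys.flatten.length with hle | hle
  · exact eq_of_isBlocks_of_length_le hk hdrop hxs (hxl.trans hF) hxw hys (hyl.trans hF') hyw hle
  · exact (eq_of_isBlocks_of_length_le hk hdrop hys (hyl.trans hF') hyw hxs (hxl.trans hF) hxw
      hle).symm

theorem le_score_of_forall_isInfix_occ_eq {F : Set V} {L : ℕ} (hL : 0 < L) {w : List V}
    (hw : ∀ u, u <:+: w → u.length = L → occ u = F) {j : ℕ} (hj : j * L ≤ w.length) :
    j ≤ score F w := by
  induction j generalizing w with
  | zero => exact Nat.zero_le _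
  | succ j ih =>
    rw [Nat.succ_mul] at hj
    set B := w.drop (w.length - L)
    have hwB : w.take (w.length - L) ++ B = w := List.take_append_drop _ w
    have hB : B.length = L := by simp only [B, List.length_drop]; omega
    have hBocc : occ B = F := hw B (List.drop_suffix _ w).isInfix hB
    have hj' : j ≤ score F (w.take (w.length - L)) :=
      ih (fun u hu => hw u (hu.trans (List.take_prefix _ w).isInfix))
        (by rw [List.length_take]; omega)
    obtain ⟨xs, hlen, hxs, p, hp⟩ := exists_isBlocks_length_eq_score F (w.take (w.length - L))
    have hxsB : IsBlocks F (xs ++ [B]) := isBlocks_append.mpr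
      ⟨hxs, isBlocks_singleton.mpr ⟨List.ne_nil_of_length_pos (hB ▸ hL), hBocc⟩⟩
    have := le_score (w := w) hxsB
      ⟨p, by rw [List.flatten_append, List.flatten_singleton, ← List.append_assoc, hp, hwB]⟩
    simp only [List.length_append, List.length_singleton] at this
    omega

theorem occ_eq_coe_toFinset [DecidableEq V] (w : List V) : occ w = ↑w.toFinset := by
  ext; simp [occ]

/-- Growth lemma: either all infixes of length `k ^ (|occ w| - 1)` use every letter of `w`, and
then the last `k` of them are blocks for `occ w`, or one of them lives on a smaller alphabet and
we recurse into it. -/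
theorem le_maxscore_of_pow_card_le [DecidableEq V] {k : ℕ} (hk : 1 ≤ k) (w : List V)
    (hw : k ^ w.toFinset.card ≤ w.length) : k ≤ maxscore Set.univ w := by
  induction hn : w.toFinset.card using Nat.strong_induction_on generalizing w with
  | _ n ih =>
  rcases n with _ | m
  · obtain rfl : w = [] := by simpa using hn
    simp at hw
  by_cases hall : ∀ u, u <:+: w → u.length = k ^ m → occ u = occ w
  · have := le_score_of_forall_isInfix_occ_eq (Nat.pow_pos hk) hall (j := k)
      (by rw [← pow_succ']; exact hn ▸ hw)
    exact this.trans (score_le_maxscore (Set.mem_univ _) w)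
  push Not at hall
  obtain ⟨u, huw, hul, hne⟩ := hall
  have hsub : u.toFinset ⊂ w.toFinset := by
    rw [Finset.ssubset_iff_subset_ne, ← Finset.coe_subset, ne_eq, ← Finset.coe_inj,
      ← occ_eq_coe_toFinset, ← occ_eq_coe_toFinset]
    exact ⟨occ_subset_of_isInfix huw, hne⟩
  have hcard : u.toFinset.card < m + 1 := hn ▸ Finset.card_lt_card hsub
  refine (ih _ hcard u ?_ rfl).trans (maxscore_mono_of_isInfix huw)
  exact hul ▸ Nat.pow_le_pow_right hk (by omega)

theorem le_maxscore_of_pow_card_univ_le [Fintype V] {k : ℕ} (hk : 1 ≤ k) {w : List V}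
    (hw : k ^ Fintype.card V ≤ w.length) : k ≤ maxscore Set.univ w := by
  classical
  exact le_maxscore_of_pow_card_le hk w
    ((Nat.pow_le_pow_right hk (Finset.card_le_univ _)).trans hw)

end FiniteTimeMuller

namespace Arena

variable (G : Arena V)

theorem pos_one : G.pos 1 = (G.pos 0)ᶜ := by
  simp [Arena.pos]

open Classical in
noncomputable def invariantStrategy (P : List V → V → Prop) : Strategy V := fun u c =>
  if h : ∃ x, G.E c x ∧ P (u ++ [c]) x then h.choose else (G.exists_succ c).choose

theorem legal_invariantStrategy (P : List V → V → Prop) : G.Legal (G.invariantStrategy P) := by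
  intro u c
  unfold invariantStrategy
  split_ifs with h
  · exact h.choose_spec.1
  · exact (G.exists_succ c).choose_spec

def IsCompletePlay (ended : List V → Prop) (v : V) (w : List V) : Prop :=
  w.IsChain G.E ∧ w.head? = some v ∧ ended w ∧ ∀ u, u <+: w.dropLast → ¬ ended u

def IsInvariant (ended : List V → Prop) (i : Fin 2) (P : List V → V → Prop) : Prop :=
  ∀ u c, P u c → ¬ ended (u ++ [c]) →
    (c ∈ G.pos i → ∃ x, G.E c x ∧ P (u ++ [c]) x) ∧
    (c ∉ G.pos i → ∀ x, G.E c x → P (u ++ [c]) x)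

variable {G}

theorem ConsistentFin.of_isPrefix {i : Fin 2} {σ : Strategy V} {w w' : List V}
    (h : G.ConsistentFin i σ w) (hw : w' <+: w) : G.ConsistentFin i σ w' :=
  fun u c x hu => h u c x (hu.trans hw)

theorem invariantStrategy_spec {P : List V → V → Prop} {u : List V} {c : V}
    (h : ∃ x, G.E c x ∧ P (u ++ [c]) x) : P (u ++ [c]) (G.invariantStrategy P u c) := by
  simpa [invariantStrategy, h] using h.choose_spec.2

theorem invariant_of_consistentFin {ended : List V → Prop} {i : Fin 2} {P : List V → V → Prop}
    {v : V} (hv : P [] v)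
    (hstep : G.IsInvariant ended i P)
    {u : List V} {c : V} (hchain : (u ++ [c]).IsChain G.E) (hhead : (u ++ [c]).head? = some v)
    (hcons : G.ConsistentFin i (G.invariantStrategy P) (u ++ [c]))
    (hlive : ∀ w, w <+: u → ¬ ended w) : P u c := by
  induction u using List.reverseRecOn generalizing c with
  | nil => simp_all
  | append_singleton u c' ih =>
    have hpre : u ++ [c'] <+: u ++ [c'] ++ [c] := List.prefix_append _ _
    have hP : P u c' := ih (hchain.prefix hpre) (by simpa using hhead) (hcons.of_isPrefix hpre)
      fun w hw => hlive w (hw.trans (List.prefix_append _ _))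
    have hE : G.E c' c := by
      rw [List.isChain_append] at hchain
      exact hchain.2.2 c' (by simp) c (by simp)
    obtain ⟨hmine, htheirs⟩ := hstep u c' hP (hlive _ List.prefix_rfl)
    by_cases hc' : c' ∈ G.pos i
    · rw [hcons u c' c (by simp) hc']
      exact invariantStrategy_spec (hmine hc')
    · exact htheirs hc' c hE

theorem exists_invariant_of_isCompletePlay {ended : List V → Prop} {i : Fin 2}
    {P : List V → V → Prop} {v : V} (hv : P [] v)
    (hstep : G.IsInvariant ended i P)
    {w : List V} (hw : G.IsCompletePlay ended v w)
    (hcons : G.ConsistentFin i (G.invariantStrategy P) w) : ∃ u c, w = u ++ [c] ∧ P u c := by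
  obtain ⟨hchain, hhead, -, hlive⟩ := hw
  obtain ⟨u, c, rfl⟩ := w.eq_nil_or_concat'.resolve_left (by rintro rfl; simp at hhead)
  exact ⟨u, c, rfl, invariant_of_consistentFin hv hstep hchain hhead hcons
    (by simpa using hlive)⟩

variable (G) (ended win : List V → Prop)

def Safe (P : List V → V → Prop) (u : List V) (c : V) : Prop :=
  (ended (u ++ [c]) → win (u ++ [c])) ∧ (¬ ended (u ++ [c]) → P u c)

/-- Player 0 can force, within `n` more moves from the history `u ++ [c]`, that the play ends
in a history satisfying `win`. -/
def Forces : ℕ → List V → V → Prop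
  | 0, _, _ => False
  | n + 1, u, c =>
    (c ∈ G.pos 0 → ∃ x, G.E c x ∧ Safe ended win (Forces n) (u ++ [c]) x) ∧
    (c ∉ G.pos 0 → ∀ x, G.E c x → Safe ended win (Forces n) (u ++ [c]) x)

/-- Backward induction: Player 0 keeps the invariant that she can still force a win within the
remaining budget `N - |u|`; otherwise Player 1 keeps its negation, and the budget cannot run out
before the play ends. -/
theorem forces_or_avoids {N : ℕ} (hN : ∀ w : List V, N ≤ w.length → ended w) (v : V) :
    (∃ σ, G.Legal σ ∧ ∀ w, G.IsCompletePlay ended v w → G.ConsistentFin 0 σ w → win w) ∨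
    (∃ τ, G.Legal τ ∧ ∀ w, G.IsCompletePlay ended v w → G.ConsistentFin 1 τ w → ¬ win w) := by
  set P : List V → V → Prop := fun u c => Safe ended win (G.Forces ended win (N - u.length)) u c
  have hP_append (u : List V) (c : V) (n : ℕ) (hn : N - u.length = n + 1) (x : V) :
      P (u ++ [c]) x ↔ Safe ended win (G.Forces ended win n) (u ++ [c]) x := by
    simp only [P, List.length_append, List.length_singleton]
    rw [show N - (u.length + 1) = n by omega]
  by_cases hv : P [] v
  · have hstep : G.IsInvariant ended 0 P := by
      intro u c hP hlive
      have hF : G.Forces ended win (N - u.length) u c := hP.2 hlive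
      obtain ⟨n, hn⟩ : ∃ n, N - u.length = n + 1 :=
        Nat.exists_eq_succ_of_ne_zero fun h => by rw [h] at hF; exact hF
      rw [hn] at hF
      simp only [hP_append u c n hn]
      exact hF
    refine .inl ⟨G.invariantStrategy P, G.legal_invariantStrategy P, fun w hw hcons => ?_⟩
    obtain ⟨u, c, rfl, hP⟩ := exists_invariant_of_isCompletePlay hv hstep hw hcons
    exact hP.1 hw.2.2.1
  · have hstep : G.IsInvariant ended 1 fun u c => ¬ P u c := by
      intro u c hP hlive
      have hlen : (u ++ [c]).length < N := lt_of_not_ge (mt (hN _) hlive)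
      rw [List.length_append, List.length_singleton] at hlen
      obtain ⟨n, hn⟩ : ∃ n, N - u.length = n + 1 := ⟨N - u.length - 1, by omega⟩
      have hF : ¬ G.Forces ended win (n + 1) u c :=
        fun hF => hP ⟨fun h => absurd h hlive, fun _ => hn ▸ hF⟩
      simp only [hP_append u c n hn, pos_one, Set.mem_compl_iff, not_not]
      refine ⟨fun hc => ?_, fun hc x hx hx' => hF ⟨fun _ => ⟨x, hx, hx'⟩, absurd hc⟩⟩
      by_contra! hall
      exact hF ⟨fun h => absurd h hc, fun _ => hall⟩
    refine .inr ⟨G.invariantStrategy (fun u c => ¬ P u c), G.legal_invariantStrategy _,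
      fun w hw hcons hwin => ?_⟩
    obtain ⟨u, c, rfl, hP⟩ := exists_invariant_of_isCompletePlay hv hstep hw hcons
    exact hP ⟨fun _ => hwin, absurd hw.2.2.1⟩

end Arena

namespace FiniteTimeMuller

section playList

open Classical

variable (G : Arena V) (i : Fin 2) (σ τ : Strategy V) (v : V)

theorem playList_length (n : ℕ) : (playList G i σ τ v n).length = n + 1 := by
  induction n with
  | zero => rfl
  | succ n ih => simp [playList, ih]

theorem playList_succ_of_eq {n : ℕ} {u : List V} {c : V}
    (h : playList G i σ τ v n = u ++ [c]) :
    playList G i σ τ v (n + 1) = u ++ [c, if c ∈ G.pos i then σ u c else τ u c] := by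
  simp [playList, h]

theorem exists_playList_eq_append (n : ℕ) : ∃ u c, playList G i σ τ v n = u ++ [c] :=
  (playList G i σ τ v n).eq_nil_or_concat'.resolve_left
    (List.ne_nil_of_length_pos (by simp [playList_length]))

theorem playList_isPrefix {m n : ℕ} (h : m ≤ n) :
    playList G i σ τ v m <+: playList G i σ τ v n := by
  induction h with
  | refl => exact List.prefix_rfl
  | step _ ih => exact ih.trans (List.prefix_append _ _)

theorem dropLast_playList_succ (n : ℕ) :
    (playList G i σ τ v (n + 1)).dropLast = playList G i σ τ v n := by
  obtain ⟨u, c, h⟩ := exists_playList_eq_append G i σ τ v n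
  rw [playList_succ_of_eq G i σ τ v h, h]
  simp

theorem head?_playList (n : ℕ) : (playList G i σ τ v n).head? = some v := by
  obtain ⟨t, ht⟩ := playList_isPrefix G i σ τ v (Nat.zero_le n)
  rw [← ht]
  rfl

theorem isChain_playList (hσ : G.Legal σ) (hτ : G.Legal τ) (n : ℕ) :
    (playList G i σ τ v n).IsChain G.E := by
  induction n with
  | zero => exact List.isChain_singleton v
  | succ n ih =>
    obtain ⟨u, c, h⟩ := exists_playList_eq_append G i σ τ v n
    rw [h] at ih
    rw [playList_succ_of_eq G i σ τ v h, ← List.singleton_append, ← List.append_assoc,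
      List.isChain_append]
    refine ⟨ih, List.isChain_singleton _, ?_⟩
    simp only [List.getLast?_concat, List.head?_cons, Option.mem_def, Option.some.injEq]
    rintro _ rfl _ rfl
    split_ifs
    exacts [hσ u c, hτ u c]

theorem eq_playList_of_isPrefix {w : List V} {n : ℕ} (h : w <+: playList G i σ τ v n)
    (hw : w ≠ []) : w = playList G i σ τ v (w.length - 1) := by
  have hlen := h.length_le
  have hpos := List.length_pos_of_ne_nil hw
  rw [playList_length] at hlen
  have hpre := playList_isPrefix G i σ τ v (show w.length - 1 ≤ n by omega)
  exact (List.prefix_of_prefix_length_le h hpre (by rw [playList_length]; omega)).eq_of_length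
    (by rw [playList_length]; omega)

theorem playList_step {n : ℕ} {u : List V} {c x : V}
    (h : u ++ [c, x] <+: playList G i σ τ v n) :
    x = if c ∈ G.pos i then σ u c else τ u c := by
  have h1 := eq_playList_of_isPrefix G i σ τ v h (by simp)
  have h0 := eq_playList_of_isPrefix G i σ τ v
    ((List.prefix_append (u ++ [c]) [x]).trans (by simpa using h)) (by simp)
  simp only [List.length_append, List.length_cons, List.length_nil] at h0 h1
  rw [show u.length + (1 + 1) - 1 = u.length + 1 - 1 + 1 by omega,
    playList_succ_of_eq G i σ τ v h0.symm] at h1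
  simpa using h1

theorem consistentFin_zero_playList (n : ℕ) : G.ConsistentFin 0 σ (playList G 0 σ τ v n) :=
  fun u c x h hc => by simpa [hc] using playList_step G 0 σ τ v h

theorem consistentFin_one_playList (n : ℕ) : G.ConsistentFin 1 τ (playList G 0 σ τ v n) :=
  fun u c x h hc => by
    rw [Arena.pos_one, Set.mem_compl_iff] at hc
    simpa [hc] using playList_step G 0 σ τ v h

end playList

theorem exists_lt_and_map_succ_eq {f : ℕ → ℕ} {k n : ℕ} (h0 : f 0 < k)
    (hstep : ∀ m, f (m + 1) ≤ f m + 1) (hn : k ≤ f n) : ∃ m, f m < k ∧ f (m + 1) = k := by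
  induction n with
  | zero => omega
  | succ n ih =>
    by_cases h : k ≤ f n
    · exact ih h
    · exact ⟨n, by omega, by have := hstep n; omega⟩

theorem exists_ftPlay_playList [Fintype V] {G : Arena V} {σ τ : Strategy V} (hσ : G.Legal σ)
    (hτ : G.Legal τ) {k : ℕ} (hk : 2 ≤ k) (v : V) :
    ∃ n, FTPlay G k (playList G 0 σ τ v n) := by
  obtain ⟨m, hm, hm'⟩ := exists_lt_and_map_succ_eq
    (f := fun n => maxscore Set.univ (playList G 0 σ τ v n)) (k := k) (n := k ^ Fintype.card V)
    ((maxscore_le_length Set.univ [v]).trans_lt (by rw [List.length_singleton]; omega))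
    (fun n => maxscore_append_singleton_le _ (playList G 0 σ τ v n) _)
    (le_maxscore_of_pow_card_univ_le (by omega) (by rw [playList_length]; omega))
  exact ⟨m + 1, isChain_playList G 0 σ τ v hσ hτ _, hm',
    by rwa [dropLast_playList_succ]⟩

theorem not_ftWinFrom_zero_and_one [Fintype V] {G : Arena V} {F0 F1 : Set (Set V)}
    (hdisj : Disjoint F0 F1) {k : ℕ} (hk : 2 ≤ k) {v : V} (h0 : FTWinFrom G 0 F0 k v)
    (h1 : FTWinFrom G 1 F1 k v) : False := by
  obtain ⟨σ, hσ, hσwin⟩ := h0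
  obtain ⟨τ, hτ, hτwin⟩ := h1
  obtain ⟨n, hplay⟩ := exists_ftPlay_playList hσ hτ hk v
  obtain ⟨F, hF0, hF⟩ := hσwin _ hplay (head?_playList G 0 σ τ v n)
    (consistentFin_zero_playList G σ τ v n)
  obtain ⟨F', hF1, hF'⟩ := hτwin _ hplay (head?_playList G 0 σ τ v n)
    (consistentFin_one_playList G σ τ v n)
  exact hdisj.ne_of_mem hF0 hF1 (eq_of_score_eq hk hplay.2.2 hF hF')

theorem isCompletePlay_of_ftPlay {G : Arena V} {k : ℕ} {v : V} {w : List V}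
    (hw : FTPlay G k w) (hv : w.head? = some v) :
    G.IsCompletePlay (fun w => k ≤ maxscore Set.univ w) v w :=
  ⟨hw.1, hv, hw.2.1.ge, fun _ hu => not_le.mpr ((maxscore_mono_of_isPrefix hu).trans_lt hw.2.2)⟩

theorem mem_ftWinRegion_zero_or_one [Fintype V] (G : Arena V) {F0 F1 : Set (Set V)}
    (hpart : F0 ∪ F1 = Set.univ) {k : ℕ} (hk : 2 ≤ k) (v : V) :
    v ∈ FTWinRegion G 0 F0 k ∨ v ∈ FTWinRegion G 1 F1 k := by
  rcases G.forces_or_avoids (fun w => k ≤ maxscore Set.univ w)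
    (fun w => ∃ F ∈ F0, score F w = k) (fun _ hw => le_maxscore_of_pow_card_univ_le (by omega) hw)
    v with ⟨σ, hσ, hwin⟩ | ⟨τ, hτ, hwin⟩
  · exact .inl ⟨σ, hσ, fun w hw hv hcons => hwin w (isCompletePlay_of_ftPlay hw hv) hcons⟩
  · refine .inr ⟨τ, hτ, fun w hw hv hcons => ?_⟩
    obtain ⟨F, hF⟩ := exists_score_eq_of_ftPlay (by omega) hw
    have hF01 : F ∈ F0 ∪ F1 := hpart ▸ Set.mem_univ F
    exact ⟨F, hF01.resolve_left fun hF0 =>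
      hwin w (isCompletePlay_of_ftPlay hw hv) hcons ⟨F, hF0, hF⟩, hF⟩

end FiniteTimeMuller

/-- Every finite-time Muller game `(G, 𝓕₀, 𝓕₁, k)` with
threshold `k ≥ 2` is determined: the winning regions of the two players form a
partition of the vertex set. -/
theorem stmt_9 {V : Type u} [Fintype V] (G : Arena V)
    (F0 F1 : Set (Set V)) (hpart : F0 ∪ F1 = Set.univ) (hdisj : Disjoint F0 F1)
    (k : ℕ) (hk : 2 ≤ k) :
    FTWinRegion G 0 F0 k ∪ FTWinRegion G 1 F1 k = Set.univ ∧
      Disjoint (FTWinRegion G 0 F0 k) (FTWinRegion G 1 F1 k) :=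
  ⟨Set.eq_univ_of_forall fun v => FiniteTimeMuller.mem_ftWinRegion_zero_or_one G hpart hk v,
    Set.disjoint_left.mpr fun _ h0 h1 =>
      FiniteTimeMuller.not_ftWinFrom_zero_and_one hdisj hk h0 h1⟩
end

section
/- Let V be a finite set, let 𝓕₀ ⊆ 2^V, and let w be a non-empty finite word over V with ind(w) ≠ ∅. Then there exists a ⊆-maximal element F of 𝓕₀ such that ind(w) ⊆ F. -/
/-!
Every set contributing to `ind(w)` is the occurrence set of a suffix of `w`: a set `F` of
positive score is the occurrence set of the last factor of a decomposition witnessing the score,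
and an accumulator is such an occurrence set by definition. Occurrence sets of suffixes form a
chain, so `ind(w)` equals its largest contribution, and that one lies in a member of `𝓕₀`
(an accumulator `acc_F(w)` lies in `F`). Since `V` is finite, this member lies below a maximal
element of `𝓕₀`.
-/

/- Common definitions for finite-time Muller games, following
   McNaughton / Fearnley-Zimmermann. -/

universe u

variable {V : Type u}

lemma occ_drop_antitone (w : List V) : Antitone fun i => occ (w.drop i) := fun _ _ hij _ hv =>
  (List.drop_suffix_drop_left w hij).subset hv

lemma exists_isGreatest_of_subset_range_occ_drop {w : List V} {𝒞 : Set (Set V)}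
    (h𝒞 : 𝒞 ⊆ Set.range fun i => occ (w.drop i)) (hne : 𝒞.Nonempty) : ∃ C, IsGreatest 𝒞 C := by
  have hI : {i | occ (w.drop i) ∈ 𝒞}.Nonempty := by
    obtain ⟨C, hC⟩ := hne
    obtain ⟨i, rfl⟩ := h𝒞 hC
    exact ⟨i, hC⟩
  refine ⟨_, Nat.sInf_mem hI, fun C hC => ?_⟩
  obtain ⟨i, rfl⟩ := h𝒞 hC
  exact occ_drop_antitone w (Nat.sInf_le hC)

lemma exists_occ_drop_eq_of_score_pos {F : Set V} {w : List V} (h : 0 < score F w) :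
    ∃ i, occ (w.drop i) = F := by
  obtain ⟨k, ⟨xs, rfl, hxs, hsuf⟩, hk⟩ : ∃ k ∈ {k | ∃ xs : List (List V), xs.length = k ∧
      (∀ x ∈ xs, x ≠ [] ∧ occ x = F) ∧ xs.flatten <:+ w}, 0 < k := by
    by_contra! hle
    exact h.ne' (Nat.le_zero.mp (csSup_le' hle))
  have hxs_ne : xs ≠ [] := List.length_pos_iff.mp hk
  have hlast : xs.getLast hxs_ne <:+ w := by
    refine List.IsSuffix.trans ?_ hsuf
    conv_rhs => rw [← List.dropLast_append_getLast hxs_ne]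
    simp
  exact ⟨_, List.suffix_iff_eq_drop.mp hlast ▸ (hxs _ (List.getLast_mem hxs_ne)).2⟩

lemma accGood_drop_sInf (F : Set V) (w : List V) :
    AccGood F w (w.drop (sInf {i | AccGood F w (w.drop i)})) := by
  refine Nat.sInf_mem (s := {i | AccGood F w (w.drop i)}) ⟨w.length, ?_⟩
  rw [Set.mem_ofPred_eq, List.drop_length]
  refine ⟨List.nil_suffix, fun v hv => absurd hv List.not_mem_nil, fun y hy => ?_⟩
  simp [List.suffix_nil.mp hy]

lemma acc_subset (F : Set V) (w : List V) : acc F w ⊆ F :=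
  (accGood_drop_sInf F w).2.1

def indParts (𝓕 : Set (Set V)) (w : List V) : Set (Set V) :=
  {F ∈ 𝓕 | 0 < score F w} ∪ (acc · w) '' {F ∈ 𝓕 | acc F w ≠ ∅}

lemma ind_eq_sUnion_indParts (𝓕 : Set (Set V)) (w : List V) : ind 𝓕 w = ⋃₀ indParts 𝓕 w := by
  rw [ind, indParts, Set.sUnion_union, Set.sUnion_image, Set.sUnion_eq_biUnion]

lemma indParts_subset_range_occ_drop (𝓕 : Set (Set V)) (w : List V) :
    indParts 𝓕 w ⊆ Set.range fun i => occ (w.drop i) := by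
  rintro C (⟨-, hC⟩ | ⟨F, -, rfl⟩)
  · exact exists_occ_drop_eq_of_score_pos hC
  · exact ⟨_, rfl⟩

lemma exists_mem_superset_of_mem_indParts {𝓕 : Set (Set V)} {w : List V} {C : Set V}
    (hC : C ∈ indParts 𝓕 w) : ∃ F ∈ 𝓕, C ⊆ F := by
  rcases hC with ⟨hC, -⟩ | ⟨F, ⟨hF, -⟩, rfl⟩
  · exact ⟨C, hC, subset_rfl⟩
  · exact ⟨F, hF, acc_subset F w⟩

lemma exists_mem_ind_subset {𝓕 : Set (Set V)} {w : List V} (hind : ind 𝓕 w ≠ ∅) :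
    ∃ F ∈ 𝓕, ind 𝓕 w ⊆ F := by
  rw [ind_eq_sUnion_indParts] at hind ⊢
  have hne : (indParts 𝓕 w).Nonempty :=
    Set.nonempty_iff_ne_empty.mpr fun h => hind (by rw [h, Set.sUnion_empty])
  obtain ⟨C, hCmem, hCub⟩ :=
    exists_isGreatest_of_subset_range_occ_drop (indParts_subset_range_occ_drop 𝓕 w) hne
  obtain ⟨F, hF, hCF⟩ := exists_mem_superset_of_mem_indParts hCmem
  exact ⟨F, hF, (Set.sUnion_subset hCub).trans hCF⟩

theorem stmt_13_general {V : Type u} [Fintype V] (F0 : Set (Set V)) (w : List V)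
    (hind : ind F0 w ≠ ∅) :
    ∃ F ∈ F0, ind F0 w ⊆ F ∧ ∀ F' ∈ F0, F ⊆ F' → F' = F := by
  obtain ⟨F, hF, hindF⟩ := exists_mem_ind_subset hind
  obtain ⟨M, hFM, hM⟩ := (Set.toFinite F0).exists_le_maximal hF
  exact ⟨M, hM.prop, hindF.trans hFM, fun F' hF' hMF' => hM.eq_of_ge hF' hMF'⟩

/-- If `ind(w) ≠ ∅`, then there exists a `⊆`-maximal element
`F` of `𝓕₀` such that `ind(w) ⊆ F`. -/
theorem stmt_13 {V : Type u} [Fintype V] (F0 : Set (Set V)) (w : List V)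
    (hw : w ≠ []) (hind : ind F0 w ≠ ∅) :
    ∃ F ∈ F0, ind F0 w ⊆ F ∧ ∀ F' ∈ F0, F ⊆ F' → F' = F :=
  stmt_13_general F0 w hind
end
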